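/- For every integer d ≥ 1 and every n ≥ 1: (i) b_{d,1}(n) = Σ_{k=0}^{⌊(n−1)/2⌋} d^k · N(n−k, k), and (ii) b_{d,2}(2n) = Σ_{k=0}^{n−1} d^k · N(n, k). -/

import Mathlib

namespace MultiOp

mutual
inductive Atom (d : ℕ) : Type where
  | star : Atom d
  | op : Fin d → Mon d → Atom d
inductive Mon (d : ℕ) : Type where
  | single : Atom d → Mon d
  | cons : Atom d → Mon d → Mon d
end

mutual
def Atom.deg {d : ℕ} : Atom d → ℕ
  | .star => 1
  | .op _ v => v.deg
def Mon.deg {d : ℕ} : Mon d → ℕ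
  | .single a => a.deg
  | .cons a v => a.deg + v.deg
end

mutual
def Atom.mult {d : ℕ} : Atom d → Fin d → ℕ
  | .star, _ => 0
  | .op i v, j => (if i = j then 1 else 0) + v.mult j
def Mon.mult {d : ℕ} : Mon d → Fin d → ℕ
  | .single a, j => a.mult j
  | .cons a v, j => a.mult j + v.mult j
end

noncomputable def a (d r : ℕ) (s : Fin d → ℕ) : ℕ :=
  Nat.card {v : Mon d // v.deg = r ∧ v.mult = s}

noncomputable def b (d ℓ n : ℕ) : ℕ :=
  Nat.card {v : Mon d // ℓ * v.deg + 2 * (∑ i, v.mult i) = n}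

noncomputable def A (d : ℕ) : MvPowerSeries (Option (Fin d)) ℚ :=
  fun e => (a d (e none) (fun i => e (some i)) : ℚ)

noncomputable def B (d ℓ : ℕ) : PowerSeries ℚ :=
  PowerSeries.mk fun n => (b d ℓ n : ℚ)

def narayana (n k : ℕ) : ℚ := (n.choose k * n.choose (k + 1) : ℚ) / n

-- ops and len

mutual
def Atom.ops {d : ℕ} : Atom d → ℕ
  | .star => 0
  | .op _ v => 1 + v.ops
def Mon.ops {d : ℕ} : Mon d → ℕ
  | .single a => a.ops
  | .cons a v => a.ops + v.ops
end

-- number of atoms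
def Mon.len {d : ℕ} : Mon d → ℕ
  | .single _ => 1
  | .cons _ v => 1 + v.len

mutual
theorem Atom.ops_eq {d : ℕ} : ∀ a : Atom d, a.ops = ∑ i, a.mult i
  | .star => by simp [Atom.ops, Atom.mult]
  | .op i v => by
      simp [Atom.ops, Atom.mult, Finset.sum_add_distrib, ← Mon.ops_eq v]
theorem Mon.ops_eq {d : ℕ} : ∀ v : Mon d, v.ops = ∑ i, v.mult i
  | .single a => by simp [Mon.ops, Mon.mult, ← Atom.ops_eq a]
  | .cons a v => by
      simp [Mon.ops, Mon.mult, Finset.sum_add_distrib, ← Atom.ops_eq a, ← Mon.ops_eq v]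
end

mutual
theorem Atom.one_le_deg {d : ℕ} : ∀ a : Atom d, 1 ≤ a.deg
  | .star => le_refl _
  | .op _ v => Mon.one_le_deg v
theorem Mon.one_le_deg {d : ℕ} : ∀ v : Mon d, 1 ≤ v.deg
  | .single a => Atom.one_le_deg a
  | .cons a v => le_trans (Atom.one_le_deg a) (Nat.le_add_right _ _)
end

theorem Mon.one_le_len {d : ℕ} (v : Mon d) : 1 ≤ v.len := by
  cases v <;> simp [Mon.len]


-- word machinery


-- word machinery, generic (letters : ℕ × Fin d)
variable {d : ℕ}

abbrev L (d : ℕ) := ℕ × Fin d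

/-- sum of first components of the first `p` letters -/
def sums (w : List (L d)) (p : ℕ) : ℕ := ((w.take p).map Prod.fst).sum

def wsum (w : List (L d)) : ℕ := (w.map Prod.fst).sum

/-- `w` is the Łukasiewicz word of a forest of `m` trees -/
def FValid (m : ℕ) (w : List (L d)) : Prop :=
  wsum w + m = w.length ∧ ∀ p < w.length, p + 1 ≤ sums w p + m

/-- all zero-letters carry the canonical label -/
def Canon [NeZero d] (w : List (L d)) : Prop := ∀ x ∈ w, x.1 = 0 → x.2 = 0

@[simp] theorem sums_zero (w : List (L d)) : sums w 0 = 0 := rfl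

@[simp] theorem sums_nil (p : ℕ) : sums ([] : List (L d)) p = 0 := by simp [sums]

theorem sums_cons (x : L d) (w : List (L d)) (p : ℕ) :
    sums (x :: w) (p + 1) = x.1 + sums w p := by simp [sums]

theorem sums_append (u v : List (L d)) (p : ℕ) :
    sums (u ++ v) p = sums u p + sums v (p - u.length) := by
  simp [sums, List.take_append]

theorem sums_length (w : List (L d)) : sums w w.length = wsum w := by
  simp [sums, wsum]

theorem sums_of_length_le (w : List (L d)) {p : ℕ} (h : w.length ≤ p) :
    sums w p = wsum w := by
  simp [sums, wsum, List.take_of_length_le h]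

theorem sums_take (w : List (L d)) (q p : ℕ) :
    sums (w.take q) p = sums w (min p q) := by
  simp [sums, List.take_take]

theorem sums_drop (w : List (L d)) (q p : ℕ) :
    sums w q + sums (w.drop q) p = sums w (q + p) := by
  have : w.take (q + p) = w.take q ++ (w.drop q).take p := by
    rw [List.take_add]
  simp [sums, this]



variable {d : ℕ}

theorem wsum_rotate (w : List (L d)) (p : ℕ) : wsum (w.rotate p) = wsum w :=
  ((w.rotate_perm p).map Prod.fst).sum_eq

theorem rotate_sums (w : List (L d)) {p m : ℕ} (hp : p ≤ w.length) (hm : m ≤ w.length) :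
    sums w p + sums (w.rotate p) m
      = sums w (min (p + m) w.length) + sums w (p + m - w.length) := by
  set n := w.length with hn
  rw [List.rotate_eq_drop_append_take hp, sums_append]
  have hdl : (w.drop p).length = n - p := by simp [hn]
  rcases le_or_gt (p + m) n with h | h
  · have h1 : m - (w.drop p).length = 0 := by omega
    rw [h1, sums_zero, Nat.add_zero, min_eq_left h]
    have h2 : p + m - n = 0 := by omega
    rw [h2, sums_zero, Nat.add_zero, ← sums_drop]
  · have h1 : sums (w.drop p) m = sums (w.drop p) (n - p) := by
      rw [sums_of_length_le _ (by omega), ← hdl, sums_length]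
    have h2 : sums w p + sums (w.drop p) (n - p) = sums w n := by
      rw [sums_drop]; congr 1; omega
    have h3 : sums (w.take p) (m - (w.drop p).length) = sums w (p + m - n) := by
      rw [sums_take]; congr 1; omega
    rw [h1, h3, min_eq_right (by omega : n ≤ p + m), ← Nat.add_assoc, h2]

theorem valid_rotate_unique (w : List (L d)) (q : ℕ) (hq : q < w.length)
    (h1 : FValid 1 w) (h2 : FValid 1 (w.rotate q)) : q = 0 := by
  by_contra hq0
  set n := w.length with hn
  have hqn : q ≤ n := le_of_lt hq
  have key := rotate_sums w hqn (show n - q ≤ n by omega)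
  have hmin : min (q + (n - q)) n = n := by omega
  have hz : q + (n - q) - n = 0 := by omega
  rw [hmin, hz, sums_zero, Nat.add_zero, sums_length] at key
  have hv1 := h1.2 q hq
  have hlrot : (w.rotate q).length = n := by simp [hn]
  have hv2 := h2.2 (n - q) (by omega)
  have hws := h1.1
  omega

theorem exists_valid_rotate (w : List (L d)) (hn1 : 1 ≤ w.length)
    (hw : wsum w + 1 = w.length) : ∃ p < w.length, FValid 1 (w.rotate p) := by
  set n := w.length with hn
  set t : ℕ → ℤ := fun j => (sums w j : ℤ) - j with ht
  have hPex : ∃ j, j < n ∧ ∀ i < n, t j ≤ t i := by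
    obtain ⟨j, hj, hjm⟩ := Finset.exists_min_image (Finset.range n) t
      ⟨0, Finset.mem_range.mpr (by omega)⟩
    exact ⟨j, Finset.mem_range.mp hj, fun i hi => hjm i (Finset.mem_range.mpr hi)⟩
  classical
  obtain ⟨p, hpn, hpm, hfirst⟩ :
      ∃ p, p < n ∧ (∀ i < n, t p ≤ t i) ∧ ∀ i < p, t p < t i := by
    refine ⟨Nat.find hPex, (Nat.find_spec hPex).1, (Nat.find_spec hPex).2, ?_⟩
    intro i hip
    have hnP := Nat.find_min hPex hip
    push_neg at hnP
    obtain ⟨i', hi', hti'⟩ := hnP (lt_trans hip (Nat.find_spec hPex).1)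
    exact lt_of_le_of_lt ((Nat.find_spec hPex).2 i' hi') hti'
  refine ⟨p, hpn, ?_, ?_⟩
  · rw [wsum_rotate, List.length_rotate]; exact hw
  · intro m hm
    rw [List.length_rotate] at hm
    have key := rotate_sums w (le_of_lt hpn) (le_of_lt hm)
    rcases lt_or_ge (p + m) n with h | h
    · rw [min_eq_left (le_of_lt h), (by omega : p + m - n = 0), sums_zero, Nat.add_zero] at key
      have := hpm (p + m) h
      simp only [ht] at this
      omega
    · have hp1 : 1 ≤ p := by omega
      have hjlt : p + m - n < p := by omega
      rw [min_eq_right h, sums_length] at key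
      simp only [← hn] at key
      have := hfirst (p + m - n) hjlt
      simp only [ht] at this
      have hjc : ((p + m - n : ℕ) : ℤ) = (p : ℤ) + m - n := by omega
      rw [hjc] at this
      omega




def nnz (w : List (L d)) : ℕ := w.countP (fun x => decide (x.1 ≠ 0))

@[simp] theorem nnz_nil : nnz ([] : List (L d)) = 0 := rfl
theorem nnz_cons (x : L d) (w : List (L d)) :
    nnz (x :: w) = (if x.1 ≠ 0 then 1 else 0) + nnz w := by
  by_cases h : x.1 = 0 <;> simp [nnz, List.countP_cons, h] <;> omega
theorem nnz_append (u v : List (L d)) : nnz (u ++ v) = nnz u + nnz v := by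
  simp [nnz, List.countP_append]
theorem nnz_rotate (w : List (L d)) (p : ℕ) : nnz (w.rotate p) = nnz w :=
  (w.rotate_perm p).countP_eq _

theorem wsum_cons (x : L d) (w : List (L d)) : wsum (x :: w) = x.1 + wsum w := by
  simp [wsum]
theorem wsum_append (u v : List (L d)) : wsum (u ++ v) = wsum u + wsum v := by
  simp [wsum]

theorem canon_rotate {w : List (L d)} [NeZero d] (h : Canon w) (p : ℕ) :
    Canon (w.rotate p) := fun x hx => h x ((w.rotate_perm p).mem_iff.mp hx)

theorem fvalid_cons_of [NeZero d] {c : ℕ} (i : Fin d) {w : List (L d)}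
    (h : FValid c w) : FValid 1 ((c, i) :: w) := by
  obtain ⟨h1, h2⟩ := h
  constructor
  · rw [wsum_cons]; simpa using by omega
  · intro p hp
    cases p with
    | zero => simp
    | succ q =>
      rw [sums_cons]
      have hq : q < w.length := by simpa using hp
      have := h2 q hq
      omega

theorem fvalid_append [NeZero d] {u w : List (L d)} {m : ℕ}
    (hu : FValid 1 u) (hw : FValid m w) : FValid (1 + m) (u ++ w) := by
  obtain ⟨hu1, hu2⟩ := hu
  obtain ⟨hw1, hw2⟩ := hw
  constructor
  · rw [wsum_append, List.length_append]; omega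
  · intro p hp
    rw [List.length_append] at hp
    rw [sums_append]
    rcases lt_or_ge p u.length with h | h
    · have := hu2 p h
      omega
    · have hq : p - u.length < w.length := by omega
      have := hw2 (p - u.length) hq
      have hsu : sums u p = wsum u := sums_of_length_le u h
      omega

section Enc
variable [NeZero d]

mutual
def Atom.enc : Atom d → List (L d)
  | .star => [(0, 0)]
  | .op i v => (v.len, i) :: v.enc
def Mon.enc : Mon d → List (L d)
  | .single a => a.enc
  | .cons a v => a.enc ++ v.enc
end

mutual
theorem Atom.length_enc : ∀ a : Atom d, a.enc.length = a.deg + a.ops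
  | .star => rfl
  | .op i v => by simp [Atom.enc, Atom.deg, Atom.ops, Mon.length_enc v]; omega
theorem Mon.length_enc : ∀ v : Mon d, v.enc.length = v.deg + v.ops
  | .single a => Atom.length_enc a
  | .cons a v => by
      simp [Mon.enc, Mon.deg, Mon.ops, Atom.length_enc a, Mon.length_enc v]; omega
end

mutual
theorem Atom.wsum_enc : ∀ a : Atom d, wsum a.enc + 1 = a.deg + a.ops
  | .star => rfl
  | .op i v => by
      have := Mon.wsum_enc v
      simp [Atom.enc, Atom.deg, Atom.ops, wsum_cons]; omega
theorem Mon.wsum_enc : ∀ v : Mon d, wsum v.enc + v.len = v.deg + v.ops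
  | .single a => by
      have := Atom.wsum_enc a
      simp [Mon.enc, Mon.len, Mon.deg, Mon.ops]; omega
  | .cons a v => by
      have := Atom.wsum_enc a
      have := Mon.wsum_enc v
      simp [Mon.enc, Mon.len, Mon.deg, Mon.ops, wsum_append]; omega
end

mutual
theorem Atom.nnz_enc : ∀ a : Atom d, nnz a.enc = a.ops
  | .star => rfl
  | .op i v => by
      have h1 := Mon.one_le_len v
      have := Mon.nnz_enc v
      simp only [Atom.enc, Atom.ops, nnz_cons]
      rw [if_pos (show ((v.len, i) : L d).1 ≠ 0 from by show v.len ≠ 0; omega)]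
      omega
theorem Mon.nnz_enc : ∀ v : Mon d, nnz v.enc = v.ops
  | .single a => Atom.nnz_enc a
  | .cons a v => by
      simp [Mon.enc, Mon.ops, nnz_append, Atom.nnz_enc a, Mon.nnz_enc v]
end

mutual
theorem Atom.canon_enc : ∀ a : Atom d, Canon a.enc
  | .star => by intro x hx h0; simp [Atom.enc] at hx; simp [hx]
  | .op i v => by
      intro x hx h0
      simp only [Atom.enc, List.mem_cons] at hx
      rcases hx with rfl | hx
      · exfalso
        have h0' : v.len = 0 := h0
        have := Mon.one_le_len v
        omega
      · exact Mon.canon_enc v x hx h0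
theorem Mon.canon_enc : ∀ v : Mon d, Canon v.enc
  | .single a => Atom.canon_enc a
  | .cons a v => by
      intro x hx h0
      simp only [Mon.enc, List.mem_append] at hx
      rcases hx with hx | hx
      · exact Atom.canon_enc a x hx h0
      · exact Mon.canon_enc v x hx h0
end

mutual
theorem Atom.fvalid_enc : ∀ a : Atom d, FValid 1 a.enc
  | .star => by
      constructor
      · rfl
      · intro p hp
        simp only [Atom.enc, List.length_singleton] at hp
        interval_cases p
        simp
  | .op i v => fvalid_cons_of i (Mon.fvalid_enc v)
theorem Mon.fvalid_enc : ∀ v : Mon d, FValid v.len v.enc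
  | .single a => Atom.fvalid_enc a
  | .cons a v => fvalid_append (Atom.fvalid_enc a) (Mon.fvalid_enc v)
end

end Enc


section Inj
variable [NeZero d]

mutual
theorem Atom.enc_append_inj : ∀ (a a' : Atom d) (r r' : List (L d)),
    a.enc ++ r = a'.enc ++ r' → a = a' ∧ r = r'
  | .star, .star, r, r' => by
      intro h
      simp only [Atom.enc, List.cons_append, List.nil_append, List.cons.injEq] at h
      exact ⟨rfl, h.2⟩
  | .star, .op i' v', r, r' => by
      intro h
      simp only [Atom.enc, List.cons_append, List.cons.injEq, Prod.mk.injEq] at h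
      exfalso; have := Mon.one_le_len v'; omega
  | .op i v, .star, r, r' => by
      intro h
      simp only [Atom.enc, List.cons_append, List.cons.injEq, Prod.mk.injEq] at h
      exfalso; have := Mon.one_le_len v; omega
  | .op i v, .op i' v', r, r' => by
      intro h
      simp only [Atom.enc, List.cons_append, List.cons.injEq, Prod.mk.injEq] at h
      obtain ⟨⟨hlen, hi⟩, htail⟩ := h
      obtain ⟨hv, hr⟩ := Mon.enc_append_inj v v' r r' hlen htail
      exact ⟨by rw [hi, hv], hr⟩
theorem Mon.enc_append_inj : ∀ (v v' : Mon d) (r r' : List (L d)),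
    v.len = v'.len → v.enc ++ r = v'.enc ++ r' → v = v' ∧ r = r'
  | .single a, .single a', r, r' => by
      intro _ h
      obtain ⟨ha, hr⟩ := Atom.enc_append_inj a a' r r' h
      exact ⟨by rw [ha], hr⟩
  | .single a, .cons a' u', r, r' => by
      intro hlen _
      exfalso
      have := Mon.one_le_len u'
      simp only [Mon.len] at hlen
      omega
  | .cons a u, .single a', r, r' => by
      intro hlen _
      exfalso
      have := Mon.one_le_len u
      simp only [Mon.len] at hlen
      omega
  | .cons a u, .cons a' u', r, r' => by
      intro hlen h
      simp only [Mon.enc, List.append_assoc] at h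
      obtain ⟨ha, htail⟩ := Atom.enc_append_inj a a' _ _ h
      simp only [Mon.len] at hlen
      obtain ⟨hu, hr⟩ := Mon.enc_append_inj u u' r r' (by omega) htail
      exact ⟨by rw [ha, hu], hr⟩
end

theorem Atom.enc_injective {a a' : Atom d} (h : a.enc = a'.enc) : a = a' :=
  (Atom.enc_append_inj a a' [] [] (by simpa using h)).1

/-- build a monomial from a head atom and a list of atoms -/
def Mon.ofAux (a : Atom d) : List (Atom d) → Mon d
  | [] => .single a
  | b :: t => .cons a (Mon.ofAux b t)

theorem Mon.ofAux_len (a : Atom d) : ∀ t : List (Atom d), (Mon.ofAux a t).len = 1 + t.length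
  | [] => rfl
  | b :: t => by simp [Mon.ofAux, Mon.len, Mon.ofAux_len b t]; omega

theorem Mon.ofAux_enc (a : Atom d) :
    ∀ t : List (Atom d), (Mon.ofAux a t).enc = a.enc ++ (t.map Atom.enc).flatten
  | [] => by simp [Mon.ofAux, Mon.enc]
  | b :: t => by simp [Mon.ofAux, Mon.enc, Mon.ofAux_enc b t]

theorem decode : ∀ (w : List (L d)) (m : ℕ), FValid m w → Canon w →
    ∃ l : List (Atom d), l.length = m ∧ (l.map Atom.enc).flatten = w := by
  intro w
  induction w with
  | nil =>
      intro m hv _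
      have : m = 0 := by have h := hv.1; simp [wsum] at h; omega
      exact ⟨[], by simp [this]⟩
  | cons x rest ih =>
      intro m hv hc
      obtain ⟨c, i⟩ := x
      have hm1 : 1 ≤ m := by
        by_contra h
        have h0 := hv.2 0 (by simp)
        simp at h0
        omega
      have hlen : ((c, i) :: rest).length = rest.length + 1 := by simp
      have hrv : FValid (m - 1 + c) rest := by
        constructor
        · have := hv.1
          rw [wsum_cons] at this
          simp at this ⊢
          omega
        · intro p hp
          have := hv.2 (p + 1) (by simp; omega)
          rw [sums_cons] at this
          omega
      have hrc : Canon rest := fun y hy => hc y (List.mem_cons_of_mem _ hy)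
      obtain ⟨l', hl'len, hl'fl⟩ := ih (m - 1 + c) hrv hrc
      rcases Nat.eq_zero_or_pos c with hc0 | hc1
      · have hi : i = 0 := hc ((c, i)) List.mem_cons_self (by simp [hc0])
        refine ⟨.star :: l', by simp [hl'len]; omega, ?_⟩
        simp [Atom.enc, hl'fl, hc0, hi]
      · have hcle : c ≤ l'.length := by omega
        obtain ⟨b, t, hbt⟩ : ∃ b t, l'.take c = b :: t := by
          cases htake : l'.take c with
          | nil => exfalso; have := congrArg List.length htake; simp [hcle] at this; omega
          | cons b t => exact ⟨b, t, rfl⟩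
        refine ⟨.op i (Mon.ofAux b t) :: l'.drop c, ?_, ?_⟩
        · have := congrArg List.length hbt
          simp at this ⊢
          omega
        · have hlen_bt : (b :: t).length = c := by
            rw [← hbt]; simp [hcle]
          simp only [List.map_cons, List.flatten_cons, Atom.enc, Mon.ofAux_enc,
            Mon.ofAux_len]
          have hsplit : ((l'.take c).map Atom.enc).flatten ++ ((l'.drop c).map Atom.enc).flatten
              = rest := by
            rw [← List.flatten_append, ← List.map_append, List.take_append_drop, hl'fl]
          rw [hbt] at hsplit
          simp only [List.map_cons, List.flatten_cons] at hsplit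
          have hlt : 1 + t.length = c := by simp at hlen_bt; omega
          rw [List.append_assoc] at hsplit
          rw [hlt, List.cons_append, List.append_assoc, hsplit]
end Inj

section Count
variable (d : ℕ) [NeZero d]

/-- all words of length `n`, weight-sum `n-1`, with `j` nonzero letters, canonical labels -/
def All (n j : ℕ) : Type :=
  {w : List (L d) // w.length = n ∧ wsum w + 1 = n ∧ nnz w = j ∧ Canon w}

/-- function version -/
def AllF (n j : ℕ) : Type :=
  {f : Fin n → L d // ((∑ i, (f i).1) + 1 = n ∧
    (Finset.univ.filter fun i => (f i).1 ≠ 0).card = j) ∧ ∀ i, (f i).1 = 0 → (f i).2 = 0}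

theorem nnz_eq_sum (w : List (L d)) : nnz w = (w.map fun x => if x.1 ≠ 0 then 1 else 0).sum := by
  induction w with
  | nil => simp
  | cons x t ih => rw [nnz_cons, ih]; simp

theorem wsum_ofFn {n : ℕ} (f : Fin n → L d) : wsum (List.ofFn f) = ∑ i, (f i).1 := by
  rw [wsum, List.map_ofFn, List.sum_ofFn]; rfl

theorem nnz_ofFn {n : ℕ} (f : Fin n → L d) :
    nnz (List.ofFn f) = (Finset.univ.filter fun i => (f i).1 ≠ 0).card := by
  rw [nnz_eq_sum, List.map_ofFn, List.sum_ofFn, Finset.card_filter]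
  rfl

noncomputable def allEquivF (n j : ℕ) : AllF d n j ≃ All d n j := by
  apply Equiv.ofBijective (fun f => (⟨List.ofFn f.val, by simp, by
    rw [wsum_ofFn]; exact f.2.1.1, by
    rw [nnz_ofFn]; exact f.2.1.2, by
    intro x hx h0
    rw [List.mem_ofFn] at hx
    obtain ⟨i, hi⟩ := hx
    subst hi
    exact f.2.2 i h0⟩ : All d n j))
  constructor
  · intro f g h
    apply Subtype.ext
    have h' : List.ofFn f.val = List.ofFn g.val := congrArg Subtype.val h
    exact List.ofFn_injective h'
  · rintro ⟨w, hlen, hsum, hnnz, hcanon⟩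
    subst hlen
    refine ⟨⟨fun i => w[(i : ℕ)], ⟨?_, ?_⟩, ?_⟩, ?_⟩
    · rw [← wsum_ofFn, List.ofFn_getElem]; exact hsum
    · rw [← nnz_ofFn, List.ofFn_getElem]; exact hnnz
    · intro i h0
      exact hcanon _ (List.getElem_mem _) h0
    · apply Subtype.ext
      exact List.ofFn_getElem

end Count

section Count2
variable (d : ℕ) [NeZero d]

def suppF {n j : ℕ} (x : AllF d n j) : Finset (Fin n) :=
  Finset.univ.filter fun i => (x.val i).1 ≠ 0

theorem fiber_isEmpty {n j : ℕ} (s : Finset (Fin n)) (hs : s.card ≠ j) :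
    IsEmpty {x : AllF d n j // suppF d x = s} := by
  constructor
  rintro ⟨x, hx⟩
  exact hs (by rw [← hx]; exact x.2.1.2)

theorem sum_dite_mem {n : ℕ} (s : Finset (Fin n)) (F : ↥s → ℕ) :
    (∑ i : Fin n, if h : i ∈ s then F ⟨i, h⟩ else 0) = ∑ x : ↥s, F x := by
  have h1 : (∑ i : Fin n, if h : i ∈ s then F ⟨i, h⟩ else 0)
      = ∑ i ∈ s, (if h : i ∈ s then F ⟨i, h⟩ else 0) :=
    (Finset.sum_subset (Finset.subset_univ s) (fun i _ hi => dif_neg hi)).symm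
  rw [h1, ← Finset.sum_attach s fun i => if h : i ∈ s then F ⟨i, h⟩ else 0,
    Finset.univ_eq_attach]
  exact Finset.sum_congr rfl fun x _ => dif_pos x.2

def mkw {n : ℕ} (s : Finset (Fin n)) (g : ↥s → ℕ) (lbl : ↥s → Fin d) : Fin n → L d :=
  fun i => if h : i ∈ s then (g ⟨i, h⟩ + 1, lbl ⟨i, h⟩) else (0, 0)

theorem mkw_fst {n : ℕ} (s : Finset (Fin n)) (g : ↥s → ℕ) (lbl : ↥s → Fin d) (i : Fin n) :
    (mkw d s g lbl i).1 = if h : i ∈ s then g ⟨i, h⟩ + 1 else 0 :=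
  apply_dite Prod.fst _ _ _

theorem mkw_snd {n : ℕ} (s : Finset (Fin n)) (g : ↥s → ℕ) (lbl : ↥s → Fin d) (i : Fin n) :
    (mkw d s g lbl i).2 = if h : i ∈ s then lbl ⟨i, h⟩ else 0 :=
  apply_dite Prod.snd _ _ _

theorem mkw_sum {n : ℕ} (s : Finset (Fin n)) (g : ↥s → ℕ) (lbl : ↥s → Fin d) :
    ∑ i, (mkw d s g lbl i).1 = (∑ x, g x) + s.card := by
  simp only [mkw_fst]
  rw [sum_dite_mem s (fun x => g x + 1), Finset.sum_add_distrib]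
  simp [Finset.card_univ]

theorem mkw_supp {n : ℕ} (s : Finset (Fin n)) (g : ↥s → ℕ) (lbl : ↥s → Fin d) :
    (Finset.univ.filter fun i => (mkw d s g lbl i).1 ≠ 0) = s := by
  ext i
  by_cases h : i ∈ s <;> simp [mkw_fst, h]

theorem mkw_canon {n : ℕ} (s : Finset (Fin n)) (g : ↥s → ℕ) (lbl : ↥s → Fin d) (i : Fin n)
    (h0 : (mkw d s g lbl i).1 = 0) : (mkw d s g lbl i).2 = 0 := by
  by_cases h : i ∈ s
  · rw [mkw_fst, dif_pos h] at h0; omega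
  · rw [mkw_snd, dif_neg h]

theorem mkw_inj {n : ℕ} (s : Finset (Fin n)) (g g' : ↥s → ℕ) (lbl lbl' : ↥s → Fin d)
    (h : mkw d s g lbl = mkw d s g' lbl') : g = g' ∧ lbl = lbl' := by
  have key : ∀ x : ↥s, (g x + 1, lbl x) = ((g' x + 1 : ℕ), lbl' x) := by
    intro x
    have h1 := congrFun h x.val
    simp only [mkw, dif_pos x.2] at h1
    convert h1 <;> exact (Subtype.eta ..).symm ▸ rfl
  constructor
  · funext x
    have := (Prod.mk.injEq _ _ _ _).mp (key x)
    omega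
  · funext x
    exact ((Prod.mk.injEq _ _ _ _).mp (key x)).2

theorem mkw_eq_self {n : ℕ} (s : Finset (Fin n)) (f : Fin n → L d)
    (hmem : ∀ i ∈ s, (f i).1 ≠ 0) (hnot : ∀ i ∉ s, (f i).1 = 0)
    (hcanon : ∀ i, (f i).1 = 0 → (f i).2 = 0) :
    mkw d s (fun x => (f x.val).1 - 1) (fun x => (f x.val).2) = f := by
  funext i
  by_cases h : i ∈ s
  · rw [mkw, dif_pos h]
    have := hmem i h
    exact Prod.ext (by simp; omega) rfl
  · rw [mkw, dif_neg h]
    have h0 := hnot i h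
    exact Prod.ext (by simp [h0]) (by simp [hcanon i h0])

noncomputable def fiberEquiv {n j : ℕ} (s : Finset (Fin n)) (hs : s.card = j) :
    ({g : ↥s → ℕ // (∑ x, g x) + j + 1 = n} × (↥s → Fin d))
      ≃ {x : AllF d n j // suppF d x = s} := by
  refine Equiv.ofBijective (fun gl => ⟨⟨mkw d s gl.1.val gl.2, ⟨?_, ?_⟩,
    mkw_canon d s gl.1.val gl.2⟩, ?_⟩) ⟨?_, ?_⟩
  · rw [mkw_sum d s gl.1.val gl.2, hs]
    have := gl.1.2
    omega
  · show (Finset.univ.filter fun i => (mkw d s gl.1.val gl.2 i).1 ≠ 0).card = j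
    rw [mkw_supp, hs]
  · show (Finset.univ.filter fun i => (mkw d s gl.1.val gl.2 i).1 ≠ 0) = s
    exact mkw_supp d s gl.1.val gl.2
  · rintro ⟨⟨g, hg⟩, lbl⟩ ⟨⟨g', hg'⟩, lbl'⟩ h
    have h' : mkw d s g lbl = mkw d s g' lbl' := congrArg (fun z => z.val.val) h
    obtain ⟨h1, h2⟩ := mkw_inj d s g g' lbl lbl' h'
    subst h1; subst h2
    rfl
  · rintro ⟨⟨f, hf⟩, hsupp⟩
    have hmem : ∀ i ∈ s, (f i).1 ≠ 0 := by
      intro i h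
      have : i ∈ suppF d (⟨f, hf⟩ : AllF d n j) := by rw [hsupp]; exact h
      simpa [suppF] using this
    have hnot : ∀ i ∉ s, (f i).1 = 0 := by
      intro i h
      by_contra hne
      exact h (by rw [← hsupp]; simpa [suppF] using hne)
    have hsum2 : (∑ x : ↥s, ((f x.val).1 - 1)) + j + 1 = n := by
      have e1 : (∑ x : ↥s, ((f x.val).1 - 1)) + s.card = ∑ x : ↥s, (f x.val).1 := by
        have hc : s.card = ∑ _x : ↥s, 1 := by simp [Finset.card_univ]
        rw [hc, ← Finset.sum_add_distrib]
        apply Finset.sum_congr rfl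
        intro x _
        have := hmem x.val x.2
        omega
      have e2 : (∑ x : ↥s, (f x.val).1) = ∑ i, (f i).1 := by
        rw [← sum_dite_mem s (fun x => (f x.val).1)]
        apply Finset.sum_congr rfl
        intro i _
        by_cases h : i ∈ s
        · rw [dif_pos h]
        · rw [dif_neg h]
          exact (hnot i h).symm
      have e3 := hf.1.1
      have e4 : s.card = j := hs
      omega
    refine ⟨⟨⟨fun x => (f x.val).1 - 1, by simpa using hsum2⟩, fun x => (f x.val).2⟩, ?_⟩
    apply Subtype.ext
    apply Subtype.ext
    exact mkw_eq_self d s f hmem hnot hf.2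

end Count2

section Count3
variable (d : ℕ) [NeZero d]

noncomputable def compEquiv {n j : ℕ} (hjn : j + 1 ≤ n) (s : Finset (Fin n)) :
    {g : ↥s → ℕ // (∑ x, g x) + j + 1 = n} ≃ Sym ↥s (n - (j + 1)) :=
  (Equiv.subtypeEquivRight (fun g => by constructor <;> intro h <;> omega)).trans
    (Sym.equivNatSumOfFintype ↥s (n - (j + 1))).symm

theorem finite_fiber {n j : ℕ} (hjn : j + 1 ≤ n) (s : Finset (Fin n)) :
    Finite {x : AllF d n j // suppF d x = s} := by
  by_cases hs : s.card = j
  · haveI := Finite.of_equiv _ (compEquiv (n := n) (j := j) hjn s).symm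
    exact Finite.of_equiv _ (fiberEquiv d s hs)
  · haveI := fiber_isEmpty d s hs
    infer_instance

theorem card_fiber {n j : ℕ} (hj : 1 ≤ j) (hjn : j + 1 ≤ n) (s : Finset (Fin n)) :
    Nat.card {x : AllF d n j // suppF d x = s}
      = if s.card = j then (n - 2).choose (j - 1) * d ^ j else 0 := by
  by_cases hs : s.card = j
  · rw [if_pos hs, ← Nat.card_congr (fiberEquiv d s hs), Nat.card_prod,
      Nat.card_congr (compEquiv hjn s)]
    have h1 : Nat.card (Sym ↥s (n - (j + 1)))
        = (j + (n - (j + 1)) - 1).choose (n - (j + 1)) := by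
      rw [Nat.card_eq_fintype_card, Sym.card_sym_eq_choose, Fintype.card_coe, hs]
    have h2 : (j + (n - (j + 1)) - 1).choose (n - (j + 1)) = (n - 2).choose (j - 1) := by
      have e1 : j + (n - (j + 1)) - 1 = n - 2 := by omega
      have e2 : n - (j + 1) = (n - 2) - (j - 1) := by omega
      rw [e1, e2, Nat.choose_symm (by omega)]
    have h3 : Nat.card (↥s → Fin d) = d ^ j := by
      rw [Nat.card_fun, Nat.card_eq_fintype_card, Nat.card_eq_fintype_card,
        Fintype.card_coe, Fintype.card_fin, hs]
    rw [h1, h2, h3]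
  · rw [if_neg hs]
    haveI := fiber_isEmpty d s hs
    exact Nat.card_of_isEmpty

theorem finite_AllF {n j : ℕ} (hjn : j + 1 ≤ n) : Finite (AllF d n j) := by
  haveI : ∀ s : Finset (Fin n), Finite {x : AllF d n j // suppF d x = s} :=
    fun s => finite_fiber d hjn s
  exact Finite.of_equiv _ (Equiv.sigmaFiberEquiv (suppF d (n := n) (j := j)))

theorem card_AllF {n j : ℕ} (hj : 1 ≤ j) (hjn : j + 1 ≤ n) :
    Nat.card (AllF d n j) = n.choose j * ((n - 2).choose (j - 1) * d ^ j) := by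
  classical
  haveI : ∀ s : Finset (Fin n), Finite {x : AllF d n j // suppF d x = s} :=
    fun s => finite_fiber d hjn s
  letI : ∀ s : Finset (Fin n), Fintype {x : AllF d n j // suppF d x = s} :=
    fun s => Fintype.ofFinite _
  rw [← Nat.card_congr (Equiv.sigmaFiberEquiv (suppF d (n := n) (j := j))),
    Nat.card_eq_fintype_card, Fintype.card_sigma]
  have hterm : ∀ s : Finset (Fin n), Fintype.card {x : AllF d n j // suppF d x = s}
      = if s.card = j then (n - 2).choose (j - 1) * d ^ j else 0 := by
    intro s
    rw [← Nat.card_eq_fintype_card]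
    exact card_fiber d hj hjn s
  rw [Finset.sum_congr rfl (fun s _ => hterm s), ← Finset.sum_filter]
  rw [Finset.sum_const]
  have hfil : (Finset.univ.filter fun s : Finset (Fin n) => s.card = j)
      = Finset.powersetCard j Finset.univ := by
    ext s
    simp [Finset.mem_powersetCard, Finset.subset_univ]
  rw [hfil, Finset.card_powersetCard, Finset.card_univ, Fintype.card_fin, smul_eq_mul]

end Count3

section Main
variable (d : ℕ) [NeZero d]

theorem rotate_mod' {α : Type*} (l : List α) (k n : ℕ) (h : l.length = n) :
    l.rotate (k % n) = l.rotate k := by subst h; exact List.rotate_mod l k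

theorem rotate_length' {α : Type*} (l : List α) (n : ℕ) (h : l.length = n) :
    l.rotate n = l := by subst h; exact List.rotate_length l

theorem enc_length_of {r j : ℕ} (a : Atom d) (h : a.deg = r ∧ a.ops = j) :
    a.enc.length = r + j := by rw [Atom.length_enc, h.1, h.2]

noncomputable def allEquivAtom {r j : ℕ} (hr : 1 ≤ r) :
    ({a : Atom d // a.deg = r ∧ a.ops = j} × Fin (r + j)) ≃ All d (r + j) j := by
  have hn1 : 1 ≤ r + j := by omega
  refine Equiv.ofBijective (fun ap =>
    ⟨ap.1.val.enc.rotate ap.2.val, ?_, ?_, ?_, ?_⟩) ⟨?_, ?_⟩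
  · rw [List.length_rotate]; exact enc_length_of d ap.1.val ap.1.2
  · rw [wsum_rotate]
    have := Atom.wsum_enc ap.1.val
    have h2 := enc_length_of d ap.1.val ap.1.2
    rw [Atom.length_enc] at h2
    omega
  · rw [nnz_rotate, Atom.nnz_enc]; exact ap.1.2.2
  · exact canon_rotate (Atom.canon_enc ap.1.val) _
  · rintro ⟨⟨a, ha⟩, p⟩ ⟨⟨a', ha'⟩, p'⟩ h
    have h' : a.enc.rotate p.val = a'.enc.rotate p'.val := congrArg Subtype.val h
    have hla : a.enc.length = r + j := enc_length_of d a ha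
    have hla' : a'.enc.length = r + j := enc_length_of d a' ha'
    have hq : a'.enc = a.enc.rotate ((p.val + ((r + j) - p'.val)) % (r + j)) := by
      symm
      calc a.enc.rotate ((p.val + ((r + j) - p'.val)) % (r + j))
          = a.enc.rotate (p.val + ((r + j) - p'.val)) := rotate_mod' a.enc _ _ hla
        _ = (a.enc.rotate p.val).rotate ((r + j) - p'.val) := (List.rotate_rotate _ _ _).symm
        _ = (a'.enc.rotate p'.val).rotate ((r + j) - p'.val) := by rw [h']
        _ = a'.enc.rotate (p'.val + ((r + j) - p'.val)) := List.rotate_rotate _ _ _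
        _ = a'.enc.rotate (r + j) := by congr 1; omega
        _ = a'.enc := rotate_length' a'.enc _ hla'
    have hqlt : (p.val + ((r + j) - p'.val)) % (r + j) < r + j := Nat.mod_lt _ (by omega)
    have hq0 : (p.val + ((r + j) - p'.val)) % (r + j) = 0 := by
      apply valid_rotate_unique a.enc _ (by rw [hla]; exact hqlt) (Atom.fvalid_enc a)
      rw [← hq]
      exact Atom.fvalid_enc a'
    have haa : a = a' := by
      apply Atom.enc_injective
      rw [hq, hq0, List.rotate_zero]
    have hpp : p = p' := by
      have hp1 : p.val < r + j := p.isLt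
      have hp2 : p'.val < r + j := p'.isLt
      have hdvd : (r + j) ∣ (p.val + ((r + j) - p'.val)) :=
        Nat.dvd_of_mod_eq_zero hq0
      obtain ⟨c, hc⟩ := hdvd
      have hc1 : c = 1 := by
        rcases c with _ | _ | c
        · omega
        · rfl
        · exfalso
          have h2 : (r + j) * 2 ≤ (r + j) * (c + 1 + 1) := Nat.mul_le_mul_left _ (by omega)
          omega
      rw [hc1, Nat.mul_one] at hc
      apply Fin.ext
      omega
    subst haa; subst hpp; rfl
  · rintro ⟨w, hlen, hsum, hnnz, hcanon⟩
    obtain ⟨p, hp, hvp⟩ := exists_valid_rotate w (by omega) (by rw [hlen]; exact hsum)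
    obtain ⟨l, hl1, hl2⟩ := decode (w.rotate p) 1 hvp (canon_rotate hcanon p)
    obtain ⟨a, ha⟩ : ∃ a : Atom d, l = [a] := by
      cases l with
      | nil => simp at hl1
      | cons a t =>
        cases t with
        | nil => exact ⟨a, rfl⟩
        | cons b t' => simp at hl1
    subst ha
    have henc : a.enc = w.rotate p := by simpa using hl2
    have hlenrot : (w.rotate p).length = r + j := by rw [List.length_rotate, hlen]
    have hstat : a.deg = r ∧ a.ops = j := by
      have h1 : a.enc.length = r + j := by rw [henc]; exact hlenrot
      have h2 : nnz a.enc = j := by rw [henc, nnz_rotate]; exact hnnz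
      rw [Atom.length_enc] at h1
      rw [Atom.nnz_enc] at h2
      exact ⟨by omega, h2⟩
    refine ⟨⟨⟨a, hstat⟩, ⟨((r + j) - p) % (r + j), Nat.mod_lt _ (by omega)⟩⟩, ?_⟩
    apply Subtype.ext
    show a.enc.rotate (((r + j) - p) % (r + j)) = w
    have hla : a.enc.length = r + j := by rw [henc]; exact hlenrot
    conv_lhs => rw [← hla]
    rw [List.rotate_mod, hla, henc, List.rotate_rotate]
    have : p + (r + j - p) = r + j := by rw [hlen] at hp; omega
    rw [this, ← hlen]
    exact List.rotate_length w

end Main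

section Main2
variable (d : ℕ) [NeZero d]

noncomputable def atomEquivMon (r k : ℕ) :
    {a : Atom d // a.deg = r ∧ a.ops = k + 1}
      ≃ (Fin d × {v : Mon d // v.deg = r ∧ v.ops = k}) := by
  refine Equiv.ofBijective ?_ ⟨?_, ?_⟩
  · rintro ⟨a, ha⟩
    match a, ha with
    | .star, ha => exact absurd ha.2 (by simp [Atom.ops])
    | .op i v, ha =>
      exact ⟨i, ⟨v, by
        constructor
        · exact ha.1
        · have := ha.2
          simp [Atom.ops] at this
          omega⟩⟩
  · rintro ⟨a, ha⟩ ⟨a', ha'⟩ h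
    match a, ha, a', ha', h with
    | .star, ha, _, _, _ => exact absurd ha.2 (by simp [Atom.ops])
    | .op i v, ha, .star, ha', h => exact absurd ha'.2 (by simp [Atom.ops])
    | .op i v, ha, .op i' v', ha', h =>
      simp only [Prod.mk.injEq, Subtype.mk.injEq] at h
      apply Subtype.ext
      simp only
      rw [h.1, h.2]
  · rintro ⟨i, ⟨v, hv⟩⟩
    refine ⟨⟨.op i v, ⟨hv.1, by simp [Atom.ops, hv.2]; omega⟩⟩, rfl⟩

theorem card_mon (r k : ℕ) (hr : 1 ≤ r) :
    Finite {v : Mon d // v.deg = r ∧ v.ops = k} ∧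
    Nat.card {v : Mon d // v.deg = r ∧ v.ops = k} * ((r + k + 1) * d)
      = (r + k + 1).choose (k + 1) * ((r + k - 1).choose k * d ^ (k + 1)) := by
  have hd : 1 ≤ d := Nat.one_le_iff_ne_zero.mpr (NeZero.ne d)
  have hn : r + (k + 1) = r + k + 1 := by omega
  haveI hAllF : Finite (AllF d (r + (k + 1)) (k + 1)) := finite_AllF d (by omega)
  haveI hAll : Finite (All d (r + (k + 1)) (k + 1)) :=
    Finite.of_equiv _ (allEquivF d (r + (k + 1)) (k + 1))
  have eX := allEquivAtom d (r := r) (j := k + 1) hr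
  haveI hXF : Finite ({a : Atom d // a.deg = r ∧ a.ops = k + 1} × Fin (r + (k + 1))) :=
    Finite.of_equiv _ eX.symm
  haveI hX : Finite {a : Atom d // a.deg = r ∧ a.ops = k + 1} :=
    Finite.of_injective (fun x => ((x, ⟨0, by omega⟩) :
      {a : Atom d // a.deg = r ∧ a.ops = k + 1} × Fin (r + (k + 1))))
      (fun x y h => (Prod.mk.injEq _ _ _ _).mp h |>.1)
  have eM := atomEquivMon d r k
  haveI hFdM : Finite (Fin d × {v : Mon d // v.deg = r ∧ v.ops = k}) :=
    Finite.of_equiv _ eM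
  haveI hM : Finite {v : Mon d // v.deg = r ∧ v.ops = k} :=
    Finite.of_injective (fun v => ((0, v) : Fin d × {v : Mon d // v.deg = r ∧ v.ops = k}))
      (fun x y h => (Prod.mk.injEq _ _ _ _).mp h |>.2)
  refine ⟨hM, ?_⟩
  have hcard1 : Nat.card (All d (r + (k + 1)) (k + 1))
      = Nat.card {a : Atom d // a.deg = r ∧ a.ops = k + 1} * (r + (k + 1)) := by
    rw [← Nat.card_congr eX, Nat.card_prod]
    congr 1
    rw [Nat.card_eq_fintype_card, Fintype.card_fin]
  have hcard2 : Nat.card {a : Atom d // a.deg = r ∧ a.ops = k + 1}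
      = d * Nat.card {v : Mon d // v.deg = r ∧ v.ops = k} := by
    rw [Nat.card_congr eM, Nat.card_prod, Nat.card_eq_fintype_card (α := Fin d),
      Fintype.card_fin]
  have hcard3 : Nat.card (All d (r + (k + 1)) (k + 1))
      = (r + (k + 1)).choose (k + 1) * (((r + (k + 1)) - 2).choose k * d ^ (k + 1)) := by
    rw [← Nat.card_congr (allEquivF d (r + (k + 1)) (k + 1)),
      card_AllF d (by omega) (by omega)]
    norm_num
  have e2 : (r + (k + 1)) - 2 = r + k - 1 := by omega
  rw [e2] at hcard3
  rw [hn] at hcard1 hcard3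
  calc Nat.card {v : Mon d // v.deg = r ∧ v.ops = k} * ((r + k + 1) * d)
      = d * Nat.card {v : Mon d // v.deg = r ∧ v.ops = k} * (r + k + 1) := by ring
    _ = (r + k + 1).choose (k + 1) * ((r + k - 1).choose k * d ^ (k + 1)) := by
        rw [← hcard2, ← hcard1, hcard3]

theorem binom_aux (m k : ℕ) (hm : 1 ≤ m) :
    m * ((m + 1).choose (k + 1)) * ((m - 1).choose k)
      = (m + 1) * (m.choose k) * (m.choose (k + 1)) := by
  have A1 : (m + 1) * m.choose k = (m + 1).choose (k + 1) * (k + 1) :=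
    Nat.add_one_mul_choose_eq m k
  have A2 : m * (m - 1).choose k = m.choose (k + 1) * (k + 1) := by
    have h := Nat.add_one_mul_choose_eq (m - 1) k
    have e : m - 1 + 1 = m := by omega
    rw [← e]
    exact h
  calc m * ((m + 1).choose (k + 1)) * ((m - 1).choose k)
      = (m + 1).choose (k + 1) * (m * (m - 1).choose k) := by ring
    _ = (m + 1).choose (k + 1) * (m.choose (k + 1) * (k + 1)) := by rw [A2]
    _ = ((m + 1).choose (k + 1) * (k + 1)) * m.choose (k + 1) := by ring
    _ = ((m + 1) * m.choose k) * m.choose (k + 1) := by rw [A1]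
    _ = (m + 1) * m.choose k * m.choose (k + 1) := by ring

theorem card_mon_q (r k : ℕ) (hr : 1 ≤ r) :
    (Nat.card {v : Mon d // v.deg = r ∧ v.ops = k} : ℚ)
      = (d : ℚ) ^ k * narayana (r + k) k := by
  have hd : 1 ≤ d := Nat.one_le_iff_ne_zero.mpr (NeZero.ne d)
  have hnat := (card_mon d r k hr).2
  have hb := binom_aux (r + k) k (by omega)
  have hq : (Nat.card {v : Mon d // v.deg = r ∧ v.ops = k} : ℚ) * ((r + k + 1) * d)
      = ((r + k + 1).choose (k + 1) : ℚ) * (((r + k - 1).choose k : ℚ) * (d : ℚ) ^ (k + 1)) := by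
    exact_mod_cast congrArg (Nat.cast (R := ℚ)) hnat
  have hbq : ((r + k : ℕ) : ℚ) * ((r + k + 1).choose (k + 1) : ℚ) * (((r + k - 1).choose k : ℚ))
      = ((r + k + 1 : ℕ) : ℚ) * ((r + k).choose k : ℚ) * ((r + k).choose (k + 1) : ℚ) := by
    have : ((r + k) + 1).choose (k+1) = (r + k + 1).choose (k+1) := rfl
    exact_mod_cast congrArg (Nat.cast (R := ℚ)) hb
  have hm0 : ((r + k : ℕ) : ℚ) ≠ 0 := by
    simp only [ne_eq, Nat.cast_eq_zero]
    omega
  have hd0 : (d : ℚ) ≠ 0 := by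
    simp only [ne_eq, Nat.cast_eq_zero]
    omega
  have hm10 : ((r + k + 1 : ℕ) : ℚ) ≠ 0 := by
    simp only [ne_eq, Nat.cast_eq_zero]
    omega
  rw [narayana]
  push_cast at hq hbq hm0 hd0 hm10 ⊢
  rw [← mul_div_assoc, eq_div_iff hm0]
  apply mul_left_cancel₀ (a := (((r : ℚ) + (k : ℚ) + 1) * (d : ℚ)))
    (mul_ne_zero (by positivity) hd0)
  linear_combination ((r : ℚ) + (k : ℚ)) * hq + (d : ℚ) ^ (k + 1) * hbq

end Main2

section Final
variable (d : ℕ) [NeZero d]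

theorem card_b (l n : ℕ) (hl : 1 ≤ l) :
    (b d l n : ℚ) = ∑ p ∈ ((Finset.range (n+1) ×ˢ Finset.range (n+1)).filter
        (fun p => l * p.1 + 2 * p.2 = n ∧ 1 ≤ p.1)),
      (d : ℚ) ^ p.2 * narayana (p.1 + p.2) p.2 := by
  classical
  set K := ((Finset.range (n+1) ×ˢ Finset.range (n+1)).filter
    (fun p => l * p.1 + 2 * p.2 = n ∧ 1 ≤ p.1)) with hK
  have hmemK : ∀ p : ℕ × ℕ, p ∈ K ↔
      (p.1 < n + 1 ∧ p.2 < n + 1) ∧ l * p.1 + 2 * p.2 = n ∧ 1 ≤ p.1 := by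
    intro p
    simp [hK, Finset.mem_filter, Finset.mem_product, Finset.mem_range]
  have e0 : {v : Mon d // l * v.deg + 2 * (∑ i, v.mult i) = n}
      ≃ {v : Mon d // l * v.deg + 2 * v.ops = n} :=
    Equiv.subtypeEquivRight (fun v => by rw [Mon.ops_eq])
  set B := {v : Mon d // l * v.deg + 2 * v.ops = n} with hB
  have hφmem : ∀ v : B, (v.val.deg, v.val.ops) ∈ K := by
    intro v
    rw [hmemK]
    have h1 := Mon.one_le_deg v.val
    have h2 := v.2
    refine ⟨⟨?_, ?_⟩, h2, h1⟩ <;> nlinarith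
  set φ : B → ↥K := fun v => ⟨(v.val.deg, v.val.ops), hφmem v⟩ with hφ
  have fibEq : ∀ p : ↥K, {x : B // φ x = p}
      ≃ {v : Mon d // v.deg = p.val.1 ∧ v.ops = p.val.2} := by
    intro p
    refine Equiv.ofBijective (fun x => ⟨x.val.val, ?_⟩) ⟨?_, ?_⟩
    · have h := congrArg Subtype.val x.2
      simp only [hφ] at h
      exact ⟨congrArg Prod.fst h, congrArg Prod.snd h⟩
    · rintro ⟨⟨x, hx⟩, hx2⟩ ⟨⟨y, hy⟩, hy2⟩ h
      simp only [Subtype.mk.injEq] at h ⊢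
      exact Subtype.ext h
    · rintro ⟨v, hv1, hv2⟩
      have hp := (hmemK p.val).mp p.2
      refine ⟨⟨⟨v, by rw [hv1, hv2]; exact hp.2.1⟩, ?_⟩, rfl⟩
      apply Subtype.ext
      simp only [hφ]
      rw [hv1, hv2]
  haveI hfinM : ∀ p : ↥K, Finite {v : Mon d // v.deg = p.val.1 ∧ v.ops = p.val.2} := by
    intro p
    exact (card_mon d p.val.1 p.val.2 ((hmemK p.val).mp p.2).2.2).1
  haveI hfinFib : ∀ p : ↥K, Finite {x : B // φ x = p} :=
    fun p => Finite.of_equiv _ (fibEq p).symm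
  letI : ∀ p : ↥K, Fintype {x : B // φ x = p} := fun p => Fintype.ofFinite _
  have hcardnat : Nat.card B = ∑ p ∈ K.attach,
      Nat.card {v : Mon d // v.deg = p.val.1 ∧ v.ops = p.val.2} := by
    rw [← Nat.card_congr (Equiv.sigmaFiberEquiv φ), Nat.card_eq_fintype_card,
      Fintype.card_sigma, ← Finset.univ_eq_attach]
    apply Finset.sum_congr rfl
    intro p _
    rw [← Nat.card_eq_fintype_card, Nat.card_congr (fibEq p)]
  have hb0 : b d l n = Nat.card B := Nat.card_congr e0
  rw [hb0, hcardnat]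
  push_cast
  rw [← Finset.sum_attach K (fun q => (d : ℚ) ^ q.2 * narayana (q.1 + q.2) q.2)]
  apply Finset.sum_congr rfl
  intro p _
  exact card_mon_q d p.val.1 p.val.2 ((hmemK p.val).mp p.2).2.2

end Final

/-- For `d ≥ 1` and `n ≥ 1`:
(i) `b_{d,1}(n) = Σ_{k=0}^{⌊(n−1)/2⌋} d^k · N(n−k, k)`, and
(ii) `b_{d,2}(2n) = Σ_{k=0}^{n−1} d^k · N(n, k)`. -/
theorem b_one_and_two_eq_sum_narayana (d n : ℕ) (hd : 1 ≤ d) (hn : 1 ≤ n) :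
    (b d 1 n : ℚ)
        = ∑ k ∈ Finset.range ((n - 1) / 2 + 1), (d : ℚ) ^ k * narayana (n - k) k ∧
    (b d 2 (2 * n) : ℚ)
        = ∑ k ∈ Finset.range n, (d : ℚ) ^ k * narayana n k := by
  haveI : NeZero d := ⟨by omega⟩
  constructor
  · rw [card_b d 1 n le_rfl]
    have himg : ((Finset.range (n+1) ×ˢ Finset.range (n+1)).filter
        (fun p => 1 * p.1 + 2 * p.2 = n ∧ 1 ≤ p.1))
        = (Finset.range ((n-1)/2 + 1)).image (fun k => (n - 2*k, k)) := by
      ext ⟨a, b⟩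
      simp only [Finset.mem_filter, Finset.mem_product, Finset.mem_range, Finset.mem_image,
        Prod.mk.injEq]
      constructor
      · rintro ⟨⟨h1, h2⟩, h3, h4⟩
        exact ⟨b, by omega, by omega, by omega⟩
      · rintro ⟨k, hk, rfl, rfl⟩
        refine ⟨⟨?_, ?_⟩, ?_, ?_⟩ <;> omega
    rw [himg, Finset.sum_image (fun x _ y _ h => by simpa using congrArg Prod.snd h)]
    apply Finset.sum_congr rfl
    intro k hk
    rw [Finset.mem_range] at hk
    have e : n - 2*k + k = n - k := by omega
    simp only [e]
  · rw [card_b d 2 (2 * n) (by omega)]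
    have himg : ((Finset.range (2*n+1) ×ˢ Finset.range (2*n+1)).filter
        (fun p => 2 * p.1 + 2 * p.2 = 2*n ∧ 1 ≤ p.1))
        = (Finset.range n).image (fun k => (n - k, k)) := by
      ext ⟨a, b⟩
      simp only [Finset.mem_filter, Finset.mem_product, Finset.mem_range, Finset.mem_image,
        Prod.mk.injEq]
      constructor
      · rintro ⟨⟨h1, h2⟩, h3, h4⟩
        exact ⟨b, by omega, by omega, by omega⟩
      · rintro ⟨k, hk, rfl, rfl⟩
        refine ⟨⟨?_, ?_⟩, ?_, ?_⟩ <;> omega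
    rw [himg, Finset.sum_image (fun x _ y _ h => by simpa using congrArg Prod.snd h)]
    apply Finset.sum_congr rfl
    intro k hk
    rw [Finset.mem_range] at hk
    have e : n - k + k = n := by omega
    simp only [e]

end MultiOp
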